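/- Under the hypotheses below (in particular k² ≠ conj(k)², Δ⁺ ≠ 0, Δ⁻ ≠ 0), for each ε ∈ {+1,−1} one has the 2×2 matrix identity P_ε·[ (4k·conj(k)/d²)·|y⟩⟨z| + (2k/d)·(|ỹ⟩⟨z| + |y⟩⟨z̃|) ]·P_{−ε} = −(4k²/d²)·P_ε·|z⟩⟨y|·P_{−ε}, where d = k² − conj(k)² and P_ε = (I+εσ₃)/2. -/

import Mathlib

open Matrix Complex ComplexConjugate

noncomputable section

abbrev M2 := Matrix (Fin 2) (Fin 2) ℂ
abbrev Vec2 := Matrix (Fin 2) (Fin 1) ℂ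

def sigma3 : M2 := !![1, 0; 0, -1]
def sigma2 : M2 := !![0, -Complex.I; Complex.I, 0]

/-- ⟨u|M|v⟩ = u†Mv -/
def qform (u : Vec2) (M : M2) (v : Vec2) : ℂ := (uᴴ * M * v) 0 0

def a11 (k : ℂ) (y : Vec2) (ε : ℂ) : ℂ :=
  k * qform y (1 + ε • sigma3) y + conj k * qform y (1 - ε • sigma3) y

def a12 (k : ℂ) (y yt : Vec2) (ε : ℂ) : ℂ :=
  k * qform y (1 + ε • sigma3) yt + conj k * qform y (1 - ε • sigma3) yt

def a21 (k : ℂ) (y yt : Vec2) (ε : ℂ) : ℂ :=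
  k * qform yt (1 + ε • sigma3) y + conj k * qform yt (1 - ε • sigma3) y

def a22 (k : ℂ) (yt : Vec2) (ε : ℂ) : ℂ :=
  k * qform yt (1 + ε • sigma3) yt + conj k * qform yt (1 - ε • sigma3) yt

def b11 (k : ℂ) (y : Vec2) (ε : ℂ) : ℂ :=
  (k ^ 2 + (conj k) ^ 2) * qform y (1 + ε • sigma3) y
    + 2 * k * conj k * qform y (1 - ε • sigma3) y

def b12 (k : ℂ) (y yt : Vec2) (ε : ℂ) : ℂ :=
  (k ^ 2 + (conj k) ^ 2) * qform y (1 + ε • sigma3) yt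
    + 2 * k * conj k * qform y (1 - ε • sigma3) yt

def b21 (k : ℂ) (y yt : Vec2) (ε : ℂ) : ℂ :=
  (k ^ 2 + (conj k) ^ 2) * qform yt (1 + ε • sigma3) y
    + 2 * k * conj k * qform yt (1 - ε • sigma3) y

def c11 (k : ℂ) (y : Vec2) (ε : ℂ) : ℂ :=
  (k ^ 3 + 3 * k * (conj k) ^ 2) * qform y (1 + ε • sigma3) y
    + ((conj k) ^ 3 + 3 * conj k * k ^ 2) * qform y (1 - ε • sigma3) y

def Δf (k : ℂ) (y yt : Vec2) (ε : ℂ) : ℂ :=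
  (k ^ 2 - (conj k) ^ 2) ^ 2
      * (a21 k y yt ε * a12 k y yt ε - a11 k y ε * a22 k yt ε)
    + 2 * a11 k y ε * c11 k y (-ε) - b11 k y ε * b11 k y (-ε)
    + (k ^ 2 - (conj k) ^ 2)
      * (a21 k y yt ε * b11 k y (-ε) - a12 k y yt ε * b11 k y ε
          + a11 k y ε * (b12 k y yt ε - b21 k y yt (-ε)))

/-- P_ε = (I+εσ₃)/2 -/
def Pe (ε : ℂ) : M2 := (1 / 2 : ℂ) • (1 + ε • sigma3)

def dd (k : ℂ) : ℂ := k ^ 2 - (conj k) ^ 2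

/-- Λ = diag(−d³a₁₁⁺/Δ⁺, −d³a₁₁⁻/Δ⁻) -/
def Lam (k : ℂ) (y yt : Vec2) : M2 :=
  !![-(dd k) ^ 3 * a11 k y 1 / Δf k y yt 1, 0;
     0, -(dd k) ^ 3 * a11 k y (-1) / Δf k y yt (-1)]

/-- Ω = diag(d²(d·a₁₂⁺ + b₁₁⁻)/Δ⁺, d²(d·a₁₂⁻ + b₁₁⁺)/Δ⁻) -/
def Om (k : ℂ) (y yt : Vec2) : M2 :=
  !![(dd k) ^ 2 * (dd k * a12 k y yt 1 + b11 k y (-1)) / Δf k y yt 1, 0;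
     0, (dd k) ^ 2 * (dd k * a12 k y yt (-1) + b11 k y 1) / Δf k y yt (-1)]

/-- Λ̃ = diag(d²(d·a₂₁⁺ − b₁₁⁺)/Δ⁺, d²(d·a₂₁⁻ − b₁₁⁻)/Δ⁻) -/
def Lamt (k : ℂ) (y yt : Vec2) : M2 :=
  !![(dd k) ^ 2 * (dd k * a21 k y yt 1 - b11 k y 1) / Δf k y yt 1, 0;
     0, (dd k) ^ 2 * (dd k * a21 k y yt (-1) - b11 k y (-1)) / Δf k y yt (-1)]

/-- Ω̃ = diag(d(−d²a₂₂⁺ + d(b₁₂⁺−b₂₁⁻) + 2c₁₁⁻)/Δ⁺, d(−d²a₂₂⁻ + d(b₁₂⁻−b₂₁⁺) + 2c₁₁⁺)/Δ⁻) -/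
def Omt (k : ℂ) (y yt : Vec2) : M2 :=
  !![dd k * (-(dd k) ^ 2 * a22 k yt 1 + dd k * (b12 k y yt 1 - b21 k y yt (-1))
        + 2 * c11 k y (-1)) / Δf k y yt 1, 0;
     0, dd k * (-(dd k) ^ 2 * a22 k yt (-1) + dd k * (b12 k y yt (-1) - b21 k y yt 1)
        + 2 * c11 k y 1) / Δf k y yt (-1)]

/-- z = Λ·ỹ + Ω·y -/
def zv (k : ℂ) (y yt : Vec2) : Vec2 := Lam k y yt * yt + Om k y yt * y

/-- z̃ = Λ̃·ỹ + Ω̃·y -/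
def ztv (k : ℂ) (y yt : Vec2) : Vec2 := Lamt k y yt * yt + Omt k y yt * y

/-!
Write `ε = σ₃ i i` and let `j` be the other index. Then `P_ε M P_{-ε}` keeps only the entry
`M i j`, so both sides reduce to scalars built from `z i`, `conj (z j)` and `conj (z̃ j)`.
Since conjugation exchanges `k` and `conj k`, it maps `Δ^{-ε}` to `Δ^ε`, so the three scalars
share the denominator `Δ^ε`. Clearing it and `d` leaves a polynomial identity in `k`, `conj k`
and the coordinates `y i, y j, ỹ i, ỹ j` and their conjugates.
-/

lemma neg_sigma3_apply_self {i j : Fin 2} (hij : i ≠ j) : -sigma3 i i = sigma3 j j := by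
  fin_cases i <;> fin_cases j <;> simp_all [sigma3]

lemma one_add_smul_sigma3 (i : Fin 2) : 1 + sigma3 i i • sigma3 = (2 : ℂ) • single i i 1 := by
  fin_cases i <;> ext a b <;> fin_cases a <;> fin_cases b <;> norm_num [sigma3]

lemma one_sub_smul_sigma3 {i j : Fin 2} (hij : i ≠ j) :
    1 - sigma3 i i • sigma3 = (2 : ℂ) • single j j 1 := by
  rw [sub_eq_add_neg, ← neg_smul, neg_sigma3_apply_self hij, one_add_smul_sigma3]

lemma Pe_sigma3_apply_self (i : Fin 2) : Pe (sigma3 i i) = single i i 1 := by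
  rw [Pe, one_add_smul_sigma3, smul_smul]
  norm_num

lemma qform_smul_single (u v : Vec2) (c : ℂ) (i : Fin 2) :
    qform u (c • single i i 1) v = c * (conj (u i 0) * v i 0) := by
  fin_cases i <;> simp [qform, Matrix.mul_apply, Fin.sum_univ_two, single, mul_comm, mul_left_comm]

lemma mul_conjTranspose_apply (u v : Vec2) (i j : Fin 2) :
    (u * vᴴ) i j = u i 0 * conj (v j 0) := by
  simp [Matrix.mul_apply]

lemma diag_two_mul_apply (a b : ℂ) (v : Vec2) (i : Fin 2) :
    (!![a, 0; 0, b] * v) i 0 = !![a, 0; 0, b] i i * v i 0 := by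
  fin_cases i <;> simp [Matrix.mul_apply, Fin.sum_univ_two]

lemma conj_dd (k : ℂ) : conj (dd k) = -dd k := by
  simp only [dd, map_sub, map_pow, conj_conj, neg_sub]

section
variable (k : ℂ) (y yt : Vec2)

lemma conj_Δf_sigma3 {i j : Fin 2} (hij : i ≠ j) :
    conj (Δf k y yt (sigma3 i i)) = Δf k y yt (sigma3 j j) := by
  simp only [Δf, a11, a12, a21, a22, b11, b12, b21, c11, neg_sigma3_apply_self hij,
    neg_sigma3_apply_self hij.symm, one_add_smul_sigma3, one_sub_smul_sigma3 hij,
    one_sub_smul_sigma3 hij.symm, qform_smul_single, map_add, map_sub, map_mul, map_pow,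
    map_ofNat, conj_conj]
  ring

variable (i : Fin 2)

lemma Lam_apply_self :
    Lam k y yt i i = -dd k ^ 3 * a11 k y (sigma3 i i) / Δf k y yt (sigma3 i i) := by
  fin_cases i <;> simp [Lam, sigma3]

lemma Om_apply_self : Om k y yt i i
    = dd k ^ 2 * (dd k * a12 k y yt (sigma3 i i) + b11 k y (-sigma3 i i))
      / Δf k y yt (sigma3 i i) := by
  fin_cases i <;> simp [Om, sigma3]

lemma Lamt_apply_self : Lamt k y yt i i
    = dd k ^ 2 * (dd k * a21 k y yt (sigma3 i i) - b11 k y (sigma3 i i))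
      / Δf k y yt (sigma3 i i) := by
  fin_cases i <;> simp [Lamt, sigma3]

lemma Omt_apply_self : Omt k y yt i i
    = dd k * (-dd k ^ 2 * a22 k yt (sigma3 i i)
        + dd k * (b12 k y yt (sigma3 i i) - b21 k y yt (-sigma3 i i)) + 2 * c11 k y (-sigma3 i i))
      / Δf k y yt (sigma3 i i) := by
  fin_cases i <;> simp [Omt, sigma3]

lemma zv_apply : zv k y yt i 0 = Lam k y yt i i * yt i 0 + Om k y yt i i * y i 0 := by
  simp only [zv, Lam, Om, Matrix.add_apply, diag_two_mul_apply]

lemma ztv_apply : ztv k y yt i 0 = Lamt k y yt i i * yt i 0 + Omt k y yt i i * y i 0 := by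
  simp only [ztv, Lamt, Omt, Matrix.add_apply, diag_two_mul_apply]

end

lemma off_diagonal_entry_identity (k : ℂ) (y yt : Vec2) {i j : Fin 2} (hij : i ≠ j)
    (hd : dd k ≠ 0) (hΔ : Δf k y yt (sigma3 i i) ≠ 0) :
    4 * k * conj k / dd k ^ 2 * (y i 0 * conj (zv k y yt j 0))
        + 2 * k / dd k * (yt i 0 * conj (zv k y yt j 0) + y i 0 * conj (ztv k y yt j 0))
      = -(4 * k ^ 2) / dd k ^ 2 * (zv k y yt i 0 * conj (y j 0)) := by
  simp only [zv_apply, ztv_apply, Lam_apply_self, Om_apply_self, Lamt_apply_self, Omt_apply_self,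
    neg_sigma3_apply_self hij, neg_sigma3_apply_self hij.symm, map_add, map_sub, map_mul,
    map_div₀, map_neg, map_pow, map_ofNat, conj_dd, conj_Δf_sigma3 k y yt hij.symm]
  simp only [a11, a12, a21, a22, b11, b12, b21, c11, one_add_smul_sigma3,
    one_sub_smul_sigma3 hij, one_sub_smul_sigma3 hij.symm, qform_smul_single, map_add, map_mul,
    map_pow, map_ofNat, conj_conj]
  field_simp
  rw [dd]
  ring

theorem lemma3_first (k : ℂ) (hk : k ^ 2 ≠ (conj k) ^ 2) (y yt : Vec2)
    (hΔp : Δf k y yt 1 ≠ 0) (hΔm : Δf k y yt (-1) ≠ 0)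
    (ε : ℂ) (hε : ε = 1 ∨ ε = -1) :
    Pe ε * ((4 * k * conj k / (dd k) ^ 2) • (y * (zv k y yt)ᴴ)
        + (2 * k / dd k) • (yt * (zv k y yt)ᴴ + y * (ztv k y yt)ᴴ)) * Pe (-ε)
      = (-(4 * k ^ 2) / (dd k) ^ 2) • (Pe ε * (zv k y yt * yᴴ) * Pe (-ε)) := by
  obtain ⟨i, j, hij, rfl, hΔ⟩ :
      ∃ i j : Fin 2, i ≠ j ∧ ε = sigma3 i i ∧ Δf k y yt (sigma3 i i) ≠ 0 := by
    rcases hε with rfl | rfl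
    exacts [⟨0, 1, by decide, by simp [sigma3], by simpa [sigma3] using hΔp⟩,
      ⟨1, 0, by decide, by simp [sigma3], by simpa [sigma3] using hΔm⟩]
  rw [neg_sigma3_apply_self hij, Pe_sigma3_apply_self, Pe_sigma3_apply_self,
    single_mul_mul_single, single_mul_mul_single, smul_single]
  congr 1
  simp only [one_mul, mul_one, Matrix.add_apply, Matrix.smul_apply, mul_conjTranspose_apply,
    smul_eq_mul]
  exact off_diagonal_entry_identity k y yt hij (sub_ne_zero.mpr hk) hΔ
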